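/- In the reduction from ∀∃-4-Partition to non-existence of stable SPR matchings (Lemma 4 construction), if for every map σ : [ℓ] → {0,1} there exists a σ-satisfying 4-partition of W, then the constructed SPR instance admits no stable matching. Specifically, any stable matching would force the unit resource r_1 onto the sub-instance {s_a, s_b, p_a, p_b} with cyclic preferences (s_a : p_a ≻ p_b; s_b : p_b ≻ p_a; p_a : s_b ≻ s_a; p_b : s_a ≻ s_b), which has no stable matching with one unit seat. -/

import Mathlib

/-!
Let `(Y, μ)` be stable and put `σ i := [μ r_{v_i} = p'_i]`. Stability puts every student of the
group `v_i` with `σ i` on `p'_i`, so a `σ`-satisfying partition `f` yields an allocation that still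
serves every project: `r_{v_i}` goes to `p'_i` if `σ i` and to `p_{f(v_i)}` otherwise, `r_w` goes
to `p_{f(w)}`, and `p_j` then receives exactly `θ - u_j - σ_j v_j` seats, as many as its students
can fill; this frees `r_1`. Hence if one of `s_a`, `s_b` is unmatched, the other could claim its
favourite project with `r_1`, so it sits there already, and then the unmatched one envies it.
Both cannot be matched, since `p_a` and `p_b` share the single seat of `r_1`.
-/

open scoped Classical
open Finset

/-- A Student-Project-Resource (SPR) instance.  Students have strict preferences
over `Option P` (`none` = being unmatched, ∅), projects over `Option S`.
Each resource has a positive capacity and a set of compatible projects. -/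
structure SPR (S P R : Type) [Fintype S] [Fintype R] where
  prefS : S → Option P → Option P → Prop
  prefP : P → Option S → Option S → Prop
  q : R → ℕ
  qpos : ∀ r, 0 < q r
  T : R → Set P

namespace SPR

variable {S P R : Type} [Fintype S] [Fintype R] (I : SPR S P R)

/-- Project `p` is acceptable to student `s`. -/
def accS (s : S) (p : P) : Prop := I.prefS s (some p) none

/-- Student `s` is acceptable to project `p`. -/
def accP (p : P) (s : S) : Prop := I.prefP p (some s) none

/-- A matching assigns each student at most one project, acceptable to both. -/
def IsMatching (Y : S → Option P) : Prop :=
  ∀ s p, Y s = some p → I.accS s p ∧ I.accP p s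

/-- An allocation maps every resource to a compatible project. -/
def IsAlloc (μ : R → P) : Prop := ∀ r, μ r ∈ I.T r

/-- Total capacity provided to project `p` by allocation `μ`. -/
noncomputable def cap (μ : R → P) (p : P) : ℕ :=
  ∑ r ∈ univ.filter (fun r => μ r = p), I.q r

/-- Number of students matched to project `p` in matching `Y`. -/
noncomputable def assigned (Y : S → Option P) (p : P) : ℕ :=
  (univ.filter (fun s => Y s = some p)).card

/-- `(Y, μ)` is feasible. -/
def Feasible (Y : S → Option P) (μ : R → P) : Prop :=
  I.IsMatching Y ∧ I.IsAlloc μ ∧ ∀ p, SPR.assigned Y p ≤ I.cap μ p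

/-- `(s, p)` is a claiming pair of matching `Y`. -/
def ClaimingPair (Y : S → Option P) (s : S) (p : P) : Prop :=
  I.accP p s ∧ Y s ≠ some p ∧ I.prefS s (some p) (Y s) ∧
    ∃ μ', I.Feasible (Function.update Y s (some p)) μ'

/-- `(s, p)` is an envious pair of matching `Y`. -/
def EnviousPair (Y : S → Option P) (s : S) (p : P) : Prop :=
  I.accP p s ∧ Y s ≠ some p ∧ I.prefS s (some p) (Y s) ∧
    ∃ s', Y s' = some p ∧ I.prefP p (some s) (some s')

def Nonwasteful (Y : S → Option P) (μ : R → P) : Prop :=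
  I.Feasible Y μ ∧ ∀ s p, ¬ I.ClaimingPair Y s p

def Fair (Y : S → Option P) (μ : R → P) : Prop :=
  I.Feasible Y μ ∧ ∀ s p, ¬ I.EnviousPair Y s p

def Stable (Y : S → Option P) (μ : R → P) : Prop :=
  I.Nonwasteful Y μ ∧ I.Fair Y μ

/-- `Y'` Pareto dominates `Y` (students all weakly better, one strictly). -/
def ParetoDom (Y' Y : S → Option P) : Prop :=
  (∀ s, Y' s = Y s ∨ I.prefS s (Y' s) (Y s)) ∧ ∃ s, I.prefS s (Y' s) (Y s)

/-- `Y` is Pareto efficient among feasible matchings. -/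
def ParetoEfficient (Y : S → Option P) : Prop :=
  ∀ Y' μ', I.Feasible Y' μ' → ¬ I.ParetoDom Y' Y

end SPR

section Lemma4

variable (m θ ℓ : ℕ) (w : Fin (4 * m) → ℕ) (u v : Fin ℓ → Fin (4 * m))

/-- Index `j` of `W` belongs to one of the couples `(u_i, v_i)`. -/
def InCouple (j : Fin (4 * m)) : Prop := (∃ i, u i = j) ∨ (∃ i, v i = j)

/-- A partition `f` of `W` into `m` subsets is `σ`-satisfying: every subset has
`4` elements summing to `θ`, `u_i ∈ V_i` for all `i`, and `v_i ∈ V_i` iff `σ i`. -/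
def SigmaSatisfying (hℓ : ℓ ≤ m) (σ : Fin ℓ → Bool) (f : Fin (4 * m) → Fin m) : Prop :=
  (∀ j : Fin m, (Finset.univ.filter (fun x => f x = j)).card = 4 ∧
      ∑ x ∈ Finset.univ.filter (fun x => f x = j), w x = θ) ∧
  (∀ i : Fin ℓ, f (u i) = Fin.castLE hℓ i) ∧
  (∀ i : Fin ℓ, f (v i) = Fin.castLE hℓ i ↔ σ i = true)

/-- Projects of the Figure 2 construction: `p'_1,…,p'_ℓ`, then `p_1,…,p_m`,
then `p_a` (= `false`) and `p_b` (= `true`). -/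
abbrev Proj13 := Fin ℓ ⊕ Fin m ⊕ Bool

/-- Size of the student group `s̄_i`: `θ − u_i − v_i` for `i ≤ ℓ`, `θ` otherwise. -/
def sizeS (i : Fin m) : ℕ :=
  θ - (if h : (i : ℕ) < ℓ then w (u ⟨i, h⟩) + w (v ⟨i, h⟩) else 0)

/-- Students: groups `s̄_{v_i}` of size `v_i` (preferences `p'_i ≻ p_i`), groups `s̄_i`
(wanting only `p_i`), and the two students `s_a` (= `false`) and `s_b` (= `true`). -/
abbrev Stud13 :=
  (Σ i : Fin ℓ, Fin (w (v i))) ⊕ ((Σ i : Fin m, Fin (sizeS m θ ℓ w u v i)) ⊕ Bool)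

/-- Rank of options for the students (bigger is better, `0` = unacceptable, `1` = ∅). -/
def rankS13 : Stud13 m θ ℓ w u v → Option (Proj13 m ℓ) → ℕ
  | _, none => 1
  | Sum.inl x, some p =>
      match p with
      | Sum.inl i' => if i' = x.1 then 3 else 0
      | Sum.inr (Sum.inl j) => if (j : ℕ) = (x.1 : ℕ) then 2 else 0
      | Sum.inr (Sum.inr _) => 0
  | Sum.inr (Sum.inl x), some p =>
      match p with
      | Sum.inr (Sum.inl j) => if j = x.1 then 2 else 0
      | _ => 0
  | Sum.inr (Sum.inr b), some p =>
      match p with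
      | Sum.inr (Sum.inr b') => if b' = b then 3 else 2
      | _ => 0

/-- Rank of students for the projects (bigger is better, `0` = unacceptable, `1` = ∅). -/
def rankP13 : Proj13 m ℓ → Option (Stud13 m θ ℓ w u v) → ℕ
  | _, none => 1
  | Sum.inl i, some s =>
      match s with
      | Sum.inl x => if x.1 = i then 2 else 0
      | _ => 0
  | Sum.inr (Sum.inl j), some s =>
      match s with
      | Sum.inl x => if (x.1 : ℕ) = (j : ℕ) then 3 else 0
      | Sum.inr (Sum.inl x) => if x.1 = j then 2 else 0
      | _ => 0
  | Sum.inr (Sum.inr b), some s =>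
      match s with
      | Sum.inr (Sum.inr b') => if b' = b then 2 else 3
      | _ => 0

/-- Resources: `r_{v_i}` (capacity `v_i`, compatible with `{p'_i} ∪ {p_j : j ≠ i}`),
`r_w` for `w ∈ W` outside the couples (compatible with `{p_1,…,p_m}`), and the unit
resource `r_1` (compatible with `{p_a, p_b, p_1, …, p_m}`). -/
abbrev Res13 := Fin ℓ ⊕ ({j : Fin (4 * m) // ¬ InCouple m ℓ u v j} ⊕ Unit)

/-- The SPR instance of the reduction from ∀∃-4-Partition (Lemma 4, Figure 2). -/
noncomputable def lemma4SPR (hw : ∀ j, 0 < w j) :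
    SPR (Stud13 m θ ℓ w u v) (Proj13 m ℓ) (Res13 m ℓ u v) where
  prefS s a b := rankS13 m θ ℓ w u v s b < rankS13 m θ ℓ w u v s a
  prefP p a b := rankP13 m θ ℓ w u v p b < rankP13 m θ ℓ w u v p a
  q := fun r => match r with
    | Sum.inl i => w (v i)
    | Sum.inr (Sum.inl j) => w j.1
    | Sum.inr (Sum.inr _) => 1
  qpos := by
    rintro (r | r | r) <;> dsimp only
    · exact hw _
    · exact hw _
    · omega
  T := fun r => match r with
    | Sum.inl i => {p | p = Sum.inl i ∨
        ∃ j : Fin m, (j : ℕ) ≠ (i : ℕ) ∧ p = Sum.inr (Sum.inl j)}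
    | Sum.inr (Sum.inl _) => {p | ∃ j : Fin m, p = Sum.inr (Sum.inl j)}
    | Sum.inr (Sum.inr _) => {p | (∃ j : Fin m, p = Sum.inr (Sum.inl j)) ∨
        ∃ b : Bool, p = Sum.inr (Sum.inr b)}

namespace SPR

variable {S P R : Type} [Fintype S] [Fintype R] {I : SPR S P R} {Y : S → Option P} {μ : R → P}
  {s : S} {p : P}

lemma cap_eq_sum [DecidableEq P] : I.cap μ p = ∑ r, if μ r = p then I.q r else 0 := by
  rw [cap, Finset.sum_filter]
  congr!

lemma assigned_le_card (A : Finset S) (h : ∀ s, Y s = some p → s ∈ A) : assigned Y p ≤ #A :=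
  Finset.card_le_card fun s hs => h s (Finset.mem_filter.mp hs).2

lemma card_le_assigned (A : Finset S) (h : ∀ s ∈ A, Y s = some p) : #A ≤ assigned Y p :=
  Finset.card_le_card fun s hs => Finset.mem_filter.mpr ⟨Finset.mem_univ s, h s hs⟩

lemma assigned_update_le_of_ne [DecidableEq S] (Y : S → Option P) (s : S) {p₀ : P}
    (h : p ≠ p₀) : assigned (Function.update Y s (some p₀)) p ≤ assigned Y p := by
  refine assigned_le_card _ fun s' hs' => Finset.mem_filter.mpr ⟨Finset.mem_univ s', ?_⟩
  rcases eq_or_ne s' s with rfl | hne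
  · simp [h.symm] at hs'
  · rwa [Function.update_of_ne hne] at hs'

lemma IsMatching.update [DecidableEq S] (hY : I.IsMatching Y) (hs : I.accS s p)
    (hp : I.accP p s) : I.IsMatching (Function.update Y s (some p)) := by
  intro s' p' hs'
  rcases eq_or_ne s' s with rfl | hne
  · obtain rfl : p = p' := by simpa using hs'
    exact ⟨hs, hp⟩
  · exact hY s' p' (by rwa [Function.update_of_ne hne] at hs')

lemma claimingPair_of_feasible [DecidableEq S] (hp : I.accP p s) (hne : Y s ≠ some p)
    (hpref : I.prefS s (some p) (Y s)) (hfeas : I.Feasible (Function.update Y s (some p)) μ) :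
    I.ClaimingPair Y s p :=
  ⟨hp, hne, hpref, μ, by convert hfeas⟩

lemma Stable.feasible (h : I.Stable Y μ) : I.Feasible Y μ :=
  h.1.1

lemma Stable.not_claimingPair (h : I.Stable Y μ) (s : S) (p : P) : ¬ I.ClaimingPair Y s p :=
  h.1.2 s p

lemma Stable.not_enviousPair (h : I.Stable Y μ) (s : S) (p : P) : ¬ I.EnviousPair Y s p :=
  h.2.2 s p

end SPR

variable {m θ ℓ w u v}

@[simp]
lemma rankS13_none (s : Stud13 m θ ℓ w u v) : rankS13 m θ ℓ w u v s none = 1 := by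
  rcases s with s | s | s <;> rfl

@[simp]
lemma rankP13_none (p : Proj13 m ℓ) : rankP13 m θ ℓ w u v p none = 1 := by
  rcases p with p | p | p <;> rfl

lemma sum_eq_sum_notInCouple_add {M : Type*} [AddCommMonoid M] (huinj : Function.Injective u)
    (hvinj : Function.Injective v) (huv : ∀ i i', u i ≠ v i') (g : Fin (4 * m) → M) :
    ∑ x, g x = ∑ j : {j // ¬ InCouple m ℓ u v j}, g j + ∑ i, (g (u i) + g (v i)) := by
  have hdisj : Disjoint (univ.image u) (univ.image v) := by
    simp only [Finset.disjoint_left, Finset.mem_image, Finset.mem_univ, true_and]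
    rintro _ ⟨i, rfl⟩ ⟨i', h⟩
    exact huv i i' h.symm
  have hcouple : univ.filter (InCouple m ℓ u v) = univ.image u ∪ univ.image v := by
    ext x; simp [InCouple]
  rw [← Finset.sum_filter_not_add_sum_filter univ (InCouple m ℓ u v), hcouple,
    Finset.sum_union hdisj, Finset.sum_image huinj.injOn, Finset.sum_image hvinj.injOn,
    ← Finset.sum_add_distrib, Finset.sum_subtype (p := fun x => ¬ InCouple m ℓ u v x) _ (by simp)]

variable (u v) in
def partitionAlloc (f : Fin (4 * m) → Fin m) (σ : Fin ℓ → Bool) (b : Bool) :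
    Res13 m ℓ u v → Proj13 m ℓ
  | Sum.inl i => if σ i then Sum.inl i else Sum.inr (Sum.inl (f (v i)))
  | Sum.inr (Sum.inl j) => Sum.inr (Sum.inl (f j))
  | Sum.inr (Sum.inr _) => Sum.inr (Sum.inr b)

def sigmaOfAlloc (μ : Res13 m ℓ u v → Proj13 m ℓ) (i : Fin ℓ) : Bool :=
  decide (μ (Sum.inl i) = Sum.inl i)

section

variable {hℓ : ℓ ≤ m} {hw : ∀ j, 0 < w j} {σ : Fin ℓ → Bool} {f : Fin (4 * m) → Fin m}
  {Y : Stud13 m θ ℓ w u v → Option (Proj13 m ℓ)} {μ : Res13 m ℓ u v → Proj13 m ℓ}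

lemma SigmaSatisfying.apply_u_eq_iff (hf : SigmaSatisfying m θ ℓ w u v hℓ σ f) (i : Fin ℓ)
    (j : Fin m) : f (u i) = j ↔ (i : ℕ) = j := by
  rw [hf.2.1 i, Fin.ext_iff, Fin.val_castLE]

lemma SigmaSatisfying.apply_v_eq_iff (hf : SigmaSatisfying m θ ℓ w u v hℓ σ f) (i : Fin ℓ)
    (j : Fin m) (hσ : σ i = true) : f (v i) = j ↔ (i : ℕ) = j := by
  rw [(hf.2.2 i).mpr hσ, Fin.ext_iff, Fin.val_castLE]

lemma SigmaSatisfying.w_u_add_w_v_le (hf : SigmaSatisfying m θ ℓ w u v hℓ σ f)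
    (huv : ∀ i i', u i ≠ v i') {i : Fin ℓ} (hσ : σ i = true) : w (u i) + w (v i) ≤ θ := by
  have hsub : {u i, v i} ⊆ univ.filter (fun x => f x = Fin.castLE hℓ i) := by
    simp [Finset.insert_subset_iff, hf.2.1 i, (hf.2.2 i).mpr hσ]
  calc w (u i) + w (v i) = ∑ x ∈ {u i, v i}, w x := (Finset.sum_pair (huv i i)).symm
    _ ≤ ∑ x ∈ univ.filter (fun x => f x = Fin.castLE hℓ i), w x :=
      Finset.sum_le_sum_of_subset hsub
    _ = θ := (hf.1 _).2

lemma sizeS_add_sum (h : ∀ i, w (u i) + w (v i) ≤ θ) (j : Fin m) :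
    sizeS m θ ℓ w u v j + ∑ i : Fin ℓ, (if (i : ℕ) = j then w (u i) + w (v i) else 0) = θ := by
  unfold sizeS
  by_cases hj : (j : ℕ) < ℓ
  · rw [dif_pos hj, Fintype.sum_eq_single ⟨j, hj⟩ fun i hi => if_neg fun h => hi (Fin.ext h),
      if_pos rfl]
    exact Nat.sub_add_cancel (h _)
  · rw [dif_neg hj, Finset.sum_eq_zero fun i _ => if_neg fun h => hj (by omega)]
    rfl

lemma lemma4SPR_prefS_of_eq_three {s : Stud13 m θ ℓ w u v} {p : Proj13 m ℓ}
    {o : Option (Proj13 m ℓ)} (h : rankS13 m θ ℓ w u v s (some p) = 3) (ho : o ≠ some p) :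
    (lemma4SPR m θ ℓ w u v hw).prefS s (some p) o := by
  change rankS13 m θ ℓ w u v s o < rankS13 m θ ℓ w u v s (some p)
  rw [h]
  rcases o with _ | o
  · simp
  rcases s with _ | _ | _ <;> rcases p with _ | _ | _ <;> rcases o with _ | _ | _ <;>
    simp [rankS13] at h ho ⊢ <;> split_ifs <;> grind

lemma lemma4SPR_accS_iff {s : Stud13 m θ ℓ w u v} {p : Proj13 m ℓ} :
    (lemma4SPR m θ ℓ w u v hw).accS s p ↔ 1 < rankS13 m θ ℓ w u v s (some p) := by
  simp [SPR.accS, lemma4SPR]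

lemma lemma4SPR_accP_iff {s : Stud13 m θ ℓ w u v} {p : Proj13 m ℓ} :
    (lemma4SPR m θ ℓ w u v hw).accP p s ↔ 1 < rankP13 m θ ℓ w u v p (some s) := by
  simp [SPR.accP, lemma4SPR]

lemma lemma4SPR_cap_eq (p : Proj13 m ℓ) :
    (lemma4SPR m θ ℓ w u v hw).cap μ p =
      (∑ i, if μ (Sum.inl i) = p then w (v i) else 0) +
      (∑ j : {j // ¬ InCouple m ℓ u v j}, if μ (Sum.inr (Sum.inl j)) = p then w j else 0) +
      if μ (Sum.inr (Sum.inr ())) = p then 1 else 0 := by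
  rw [SPR.cap_eq_sum, Fintype.sum_sum_type, Fintype.sum_sum_type, add_assoc]
  simp only [Finset.univ_unique, Finset.sum_singleton]
  rfl

lemma lemma4SPR_cap_inl (hμ : (lemma4SPR m θ ℓ w u v hw).IsAlloc μ) (i : Fin ℓ) :
    (lemma4SPR m θ ℓ w u v hw).cap μ (Sum.inl i) =
      if μ (Sum.inl i) = Sum.inl i then w (v i) else 0 := by
  have hv : ∀ i', i' ≠ i → μ (Sum.inl i') ≠ Sum.inl i := fun i' hne => by
    rcases hμ (Sum.inl i') with h | ⟨j, -, h⟩ <;> simp [h, hne]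
  have hW : ∀ j, μ (Sum.inr (Sum.inl j)) ≠ Sum.inl i := fun j => by
    obtain ⟨j', h⟩ := hμ (Sum.inr (Sum.inl j)); simp [h]
  have h1 : μ (Sum.inr (Sum.inr ())) ≠ Sum.inl i := by
    rcases hμ (Sum.inr (Sum.inr ())) with ⟨j, h⟩ | ⟨b, h⟩ <;> simp [h]
  rw [lemma4SPR_cap_eq, Fintype.sum_eq_single i fun i' hne => if_neg (hv i' hne)]
  simp [hW, h1]

lemma lemma4SPR_cap_ab (hμ : (lemma4SPR m θ ℓ w u v hw).IsAlloc μ) (b : Bool) :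
    (lemma4SPR m θ ℓ w u v hw).cap μ (Sum.inr (Sum.inr b)) =
      if μ (Sum.inr (Sum.inr ())) = Sum.inr (Sum.inr b) then 1 else 0 := by
  have hv : ∀ i, μ (Sum.inl i) ≠ Sum.inr (Sum.inr b) := fun i => by
    rcases hμ (Sum.inl i) with h | ⟨j, -, h⟩ <;> simp [h]
  have hW : ∀ j, μ (Sum.inr (Sum.inl j)) ≠ Sum.inr (Sum.inr b) := fun j => by
    obtain ⟨j', h⟩ := hμ (Sum.inr (Sum.inl j)); simp [h]
  simp [lemma4SPR_cap_eq, hv, hW]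

lemma lemma4SPR_assigned_inl_le (hY : (lemma4SPR m θ ℓ w u v hw).IsMatching Y) (i : Fin ℓ) :
    SPR.assigned Y (Sum.inl i) ≤ w (v i) := by
  refine (SPR.assigned_le_card (univ.image fun x => Sum.inl ⟨i, x⟩) ?_).trans
    (Finset.card_image_le.trans (by simp))
  intro s hs
  have := lemma4SPR_accS_iff.mp (hY s _ hs).1
  rcases s with ⟨i', x⟩ | _ | _ <;> simp [rankS13] at this ⊢
  split_ifs at this with h
  · subst h; exact ⟨rfl, x, HEq.rfl⟩
  · omega

lemma lemma4SPR_assigned_p_le (hY : (lemma4SPR m θ ℓ w u v hw).IsMatching Y)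
    (hσ : ∀ i, σ i = true → ∀ x, Y (Sum.inl ⟨i, x⟩) = some (Sum.inl i)) (j : Fin m) :
    SPR.assigned Y (Sum.inr (Sum.inl j)) ≤
      ∑ i : Fin ℓ, (if (i : ℕ) = j ∧ σ i = false then w (v i) else 0) +
        sizeS m θ ℓ w u v j := by
  let groupsV := (univ.filter fun i : Fin ℓ => (i : ℕ) = j ∧ σ i = false).sigma
    fun i => (univ : Finset (Fin (w (v i))))
  refine (SPR.assigned_le_card (groupsV.image Sum.inl ∪
    univ.image fun x => Sum.inr (Sum.inl ⟨j, x⟩)) ?_).trans ?_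
  · intro s hs
    have := lemma4SPR_accS_iff.mp (hY s _ hs).1
    rcases s with ⟨i, x⟩ | ⟨j', x⟩ | _ <;> simp [rankS13] at this ⊢
    · split_ifs at this with h
      · simp only [groupsV, Finset.mem_sigma, Finset.mem_filter, Finset.mem_univ, true_and,
          and_true]
        refine ⟨h.symm, Bool.eq_false_iff.mpr fun hσi => ?_⟩
        simp [hσ i hσi x] at hs
      · omega
    · split_ifs at this with h
      · subst h; exact ⟨rfl, x, HEq.rfl⟩
      · omega
  · refine (Finset.card_union_le _ _).trans (add_le_add ?_ ?_)
    · refine Finset.card_image_le.trans ?_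
      simp [groupsV, Finset.card_sigma, Finset.sum_filter]
    · exact Finset.card_image_le.trans (by simp)

lemma isAlloc_partitionAlloc (hf : SigmaSatisfying m θ ℓ w u v hℓ σ f) (b : Bool) :
    (lemma4SPR m θ ℓ w u v hw).IsAlloc (partitionAlloc u v f σ b) := by
  rintro (i | j | _)
  · by_cases hσ : σ i
    · exact Or.inl (if_pos hσ)
    · refine Or.inr ⟨f (v i), fun h => hσ ?_, if_neg hσ⟩
      exact (hf.2.2 i).mp (Fin.ext (by simpa using h))
  · exact ⟨f j, rfl⟩
  · exact Or.inr ⟨b, rfl⟩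

lemma cap_partitionAlloc_inl (hf : SigmaSatisfying m θ ℓ w u v hℓ σ f) (b : Bool) (i : Fin ℓ) :
    (lemma4SPR m θ ℓ w u v hw).cap (partitionAlloc u v f σ b) (Sum.inl i) =
      if σ i then w (v i) else 0 := by
  rw [lemma4SPR_cap_inl (isAlloc_partitionAlloc hf b)]
  by_cases hσ : σ i <;> simp [partitionAlloc, hσ]

lemma cap_partitionAlloc_ab (hf : SigmaSatisfying m θ ℓ w u v hℓ σ f) (b b' : Bool) :
    (lemma4SPR m θ ℓ w u v hw).cap (partitionAlloc u v f σ b) (Sum.inr (Sum.inr b')) =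
      if b = b' then 1 else 0 := by
  simp [lemma4SPR_cap_ab (isAlloc_partitionAlloc hf b), partitionAlloc]

lemma cap_partitionAlloc_p_add (huinj : Function.Injective u) (hvinj : Function.Injective v)
    (huv : ∀ i i', u i ≠ v i') (hf : SigmaSatisfying m θ ℓ w u v hℓ σ f) (b : Bool) (j : Fin m) :
    (lemma4SPR m θ ℓ w u v hw).cap (partitionAlloc u v f σ b) (Sum.inr (Sum.inl j)) +
      ∑ i : Fin ℓ, (if (i : ℕ) = j then w (u i) + (if σ i then w (v i) else 0) else 0) = θ := by
  have hθ : ∑ x, (if f x = j then w x else 0) = θ := by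
    rw [← Finset.sum_filter]; exact (hf.1 j).2
  have hcouple : ∀ i, (if f (u i) = j then w (u i) else 0) + (if f (v i) = j then w (v i) else 0) =
      (if partitionAlloc u v f σ b (Sum.inl i) = Sum.inr (Sum.inl j) then w (v i) else 0) +
        (if (i : ℕ) = j then w (u i) + (if σ i then w (v i) else 0) else 0) := by
    intro i
    by_cases hσ : σ i
    · simp only [partitionAlloc, hσ, hf.apply_u_eq_iff, hf.apply_v_eq_iff i j hσ]
      split_ifs <;> simp_all
    · simp only [partitionAlloc, hσ, hf.apply_u_eq_iff]
      split_ifs <;> simp_all [add_comm]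
  rw [sum_eq_sum_notInCouple_add huinj hvinj huv, Finset.sum_congr rfl fun i _ => hcouple i,
    Finset.sum_add_distrib] at hθ
  rw [lemma4SPR_cap_eq, ← hθ]
  simp only [partitionAlloc, reduceCtorEq, if_false, add_zero, Sum.inr.injEq, Sum.inl.injEq]
  ring

lemma inl_eq_of_stable_of_sigmaOfAlloc (hst : (lemma4SPR m θ ℓ w u v hw).Stable Y μ) {i : Fin ℓ}
    (hσ : sigmaOfAlloc μ i = true) (x : Fin (w (v i))) : Y (Sum.inl ⟨i, x⟩) = some (Sum.inl i) := by
  obtain ⟨hY, hμ, hcap⟩ := hst.feasible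
  by_contra hne
  have hS : (lemma4SPR m θ ℓ w u v hw).accS (Sum.inl ⟨i, x⟩) (Sum.inl i) :=
    lemma4SPR_accS_iff.mpr (by simp [rankS13])
  have hP : (lemma4SPR m θ ℓ w u v hw).accP (Sum.inl i) (Sum.inl ⟨i, x⟩) :=
    lemma4SPR_accP_iff.mpr (by simp [rankP13])
  refine hst.not_claimingPair _ _ (SPR.claimingPair_of_feasible hP hne
    (lemma4SPR_prefS_of_eq_three (by simp [rankS13]) hne) ⟨hY.update hS hP, hμ, fun p => ?_⟩)
  rcases eq_or_ne p (Sum.inl i) with rfl | hp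
  · refine (lemma4SPR_assigned_inl_le (hY.update hS hP) i).trans_eq ?_
    rw [lemma4SPR_cap_inl hμ, if_pos (of_decide_eq_true hσ)]
  · exact (SPR.assigned_update_le_of_ne Y _ hp).trans (hcap p)

lemma assigned_p_le_cap_partitionAlloc (hst : (lemma4SPR m θ ℓ w u v hw).Stable Y μ)
    (huinj : Function.Injective u) (hvinj : Function.Injective v) (huv : ∀ i i', u i ≠ v i')
    (hf : SigmaSatisfying m θ ℓ w u v hℓ (sigmaOfAlloc μ) f)
    (hle : ∀ i, w (u i) + w (v i) ≤ θ) (b : Bool) (j : Fin m) :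
    SPR.assigned Y (Sum.inr (Sum.inl j)) ≤
      (lemma4SPR m θ ℓ w u v hw).cap (partitionAlloc u v f (sigmaOfAlloc μ) b)
        (Sum.inr (Sum.inl j)) := by
  have hassigned := lemma4SPR_assigned_p_le hst.feasible.1
    (fun _ hσ => inl_eq_of_stable_of_sigmaOfAlloc hst hσ) j
  have hcap := cap_partitionAlloc_p_add (hw := hw) huinj hvinj huv hf b j
  have hsize := sizeS_add_sum hle j
  have hsplit : ∑ i : Fin ℓ, (if (i : ℕ) = j then w (u i) + w (v i) else 0) =
      ∑ i : Fin ℓ, (if (i : ℕ) = j then w (u i) + (if sigmaOfAlloc μ i then w (v i) else 0)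
        else 0) +
      ∑ i : Fin ℓ, (if (i : ℕ) = j ∧ sigmaOfAlloc μ i = false then w (v i) else 0) := by
    rw [← Finset.sum_add_distrib]
    refine Finset.sum_congr rfl fun i _ => ?_
    split_ifs <;> simp_all
  omega

lemma feasible_update_ab_of_stable (hst : (lemma4SPR m θ ℓ w u v hw).Stable Y μ)
    (huinj : Function.Injective u) (hvinj : Function.Injective v) (huv : ∀ i i', u i ≠ v i')
    (hf : SigmaSatisfying m θ ℓ w u v hℓ (sigmaOfAlloc μ) f)
    (hle : ∀ i, w (u i) + w (v i) ≤ θ) {c : Bool} (hother : Y (Sum.inr (Sum.inr (!c))) = none) :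
    (lemma4SPR m θ ℓ w u v hw).Feasible
      (Function.update Y (Sum.inr (Sum.inr c)) (some (Sum.inr (Sum.inr c))))
      (partitionAlloc u v f (sigmaOfAlloc μ) c) := by
  obtain ⟨hY, hμ, hcap⟩ := hst.feasible
  have hS : (lemma4SPR m θ ℓ w u v hw).accS (Sum.inr (Sum.inr c)) (Sum.inr (Sum.inr c)) :=
    lemma4SPR_accS_iff.mpr (by simp [rankS13])
  have hP : (lemma4SPR m θ ℓ w u v hw).accP (Sum.inr (Sum.inr c)) (Sum.inr (Sum.inr c)) :=
    lemma4SPR_accP_iff.mpr (by simp [rankP13])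
  refine ⟨hY.update hS hP, isAlloc_partitionAlloc hf c, ?_⟩
  rintro (i | j | b)
  · refine (SPR.assigned_update_le_of_ne Y _ (by simp)).trans ((hcap _).trans_eq ?_)
    rw [lemma4SPR_cap_inl hμ, cap_partitionAlloc_inl hf]
    simp [sigmaOfAlloc]
  · exact (SPR.assigned_update_le_of_ne Y _ (by simp)).trans
      (assigned_p_le_cap_partitionAlloc hst huinj hvinj huv hf hle c j)
  · refine (SPR.assigned_le_card (({Sum.inr (Sum.inr c)} : Finset _).filter fun _ => c = b)
      fun s hs => ?_).trans ?_
    · have := lemma4SPR_accS_iff.mp ((hY.update hS hP) s _ hs).1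
      rcases s with _ | _ | b' <;> simp [rankS13] at this
      obtain rfl | rfl : b' = c ∨ b' = !c := by cases b' <;> cases c <;> simp
      · simp_all
      · rw [Function.update_of_ne (by cases c <;> simp), hother] at hs
        exact absurd hs (by simp)
    · rw [cap_partitionAlloc_ab hf]
      by_cases hcb : c = b <;> simp [hcb]

lemma ab_eq_some_of_stable (hst : (lemma4SPR m θ ℓ w u v hw).Stable Y μ)
    (huinj : Function.Injective u) (hvinj : Function.Injective v) (huv : ∀ i i', u i ≠ v i')
    (hf : SigmaSatisfying m θ ℓ w u v hℓ (sigmaOfAlloc μ) f)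
    (hle : ∀ i, w (u i) + w (v i) ≤ θ) {c : Bool} (hother : Y (Sum.inr (Sum.inr (!c))) = none) :
    Y (Sum.inr (Sum.inr c)) = some (Sum.inr (Sum.inr c)) := by
  by_contra hne
  refine hst.not_claimingPair _ _ (SPR.claimingPair_of_feasible ?_ hne
    (lemma4SPR_prefS_of_eq_three (by simp [rankS13]) hne)
    (feasible_update_ab_of_stable hst huinj hvinj huv hf hle hother))
  exact lemma4SPR_accP_iff.mpr (by simp [rankP13])

lemma ab_ne_none_of_stable (hst : (lemma4SPR m θ ℓ w u v hw).Stable Y μ) {c : Bool}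
    (hc : Y (Sum.inr (Sum.inr c)) = some (Sum.inr (Sum.inr c))) :
    Y (Sum.inr (Sum.inr (!c))) ≠ none := by
  intro hother
  refine hst.not_enviousPair (Sum.inr (Sum.inr (!c))) (Sum.inr (Sum.inr c))
    ⟨?_, by simp [hother], ?_, _, hc, ?_⟩
  · exact lemma4SPR_accP_iff.mpr (by cases c <;> simp [rankP13])
  · show rankS13 m θ ℓ w u v _ _ < rankS13 m θ ℓ w u v _ _
    rw [hother, rankS13_none]
    cases c <;> simp [rankS13]
  · show rankP13 m θ ℓ w u v _ _ < rankP13 m θ ℓ w u v _ _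
    cases c <;> simp [rankP13]

lemma exists_ab_eq_none_of_stable (hst : (lemma4SPR m θ ℓ w u v hw).Stable Y μ) :
    ∃ c, Y (Sum.inr (Sum.inr c)) = none := by
  obtain ⟨hY, hμ, hcap⟩ := hst.feasible
  by_contra! hmatched
  have hab : ∀ c, ∃ b, Y (Sum.inr (Sum.inr c)) = some (Sum.inr (Sum.inr b)) := by
    intro c
    obtain ⟨p, hp⟩ := Option.ne_none_iff_exists'.mp (hmatched c)
    have := lemma4SPR_accS_iff.mp (hY _ _ hp).1
    rcases p with _ | _ | b <;> simp [rankS13] at this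
    exact ⟨b, hp⟩
  obtain ⟨b₁, h₁⟩ := hab false
  obtain ⟨b₂, h₂⟩ := hab true
  have hcap_ab := fun b => (hcap (Sum.inr (Sum.inr b))).trans_eq (lemma4SPR_cap_ab hμ b)
  rcases eq_or_ne b₁ b₂ with rfl | hne
  · have h2 := (SPR.card_le_assigned {Sum.inr (Sum.inr false), Sum.inr (Sum.inr true)}
      (by simp [h₁, h₂])).trans (hcap_ab b₁)
    split_ifs at h2 <;> simp at h2
  · have hb₁ := (SPR.card_le_assigned {Sum.inr (Sum.inr false)} (by simp [h₁])).trans (hcap_ab b₁)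
    have hb₂ := (SPR.card_le_assigned {Sum.inr (Sum.inr true)} (by simp [h₂])).trans (hcap_ab b₂)
    split_ifs at hb₁ hb₂ <;> simp_all

end

variable (m θ ℓ w u v)

theorem no_stable_matching_of_forall_sigma_satisfying
    (hℓ : ℓ ≤ m) (hw : ∀ j, 0 < w j)
    (huinj : Function.Injective u) (hvinj : Function.Injective v)
    (huv : ∀ i i', u i ≠ v i')
    (hall : ∀ σ : Fin ℓ → Bool, ∃ f : Fin (4 * m) → Fin m,
      SigmaSatisfying m θ ℓ w u v hℓ σ f) :
    ¬ ∃ (Y : Stud13 m θ ℓ w u v → Option (Proj13 m ℓ))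
        (μ : Res13 m ℓ u v → Proj13 m ℓ),
        (lemma4SPR m θ ℓ w u v hw).Stable Y μ := by
  rintro ⟨Y, μ, hst⟩
  obtain ⟨f, hf⟩ := hall (sigmaOfAlloc μ)
  -- `sizeS` subtracts in `ℕ`; the all-`true` partition shows that nothing is truncated.
  obtain ⟨f₁, hf₁⟩ := hall fun _ => true
  have hle : ∀ i, w (u i) + w (v i) ≤ θ := fun i => hf₁.w_u_add_w_v_le huv rfl
  obtain ⟨c, hc⟩ := exists_ab_eq_none_of_stable hst
  have hother : Y (Sum.inr (Sum.inr (!(!c)))) = none := by rwa [Bool.not_not]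
  exact ab_ne_none_of_stable hst (ab_eq_some_of_stable hst huinj hvinj huv hf hle hother) hother

end Lemma4
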